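/- Success probability of the product measurement on the parity ensemble: let A₀, A₁ be Hermitian operators with Tr(A₀ + A₁) = 1 and {M₀, M₁} a measurement. With S_i = ½[(A₀+A₁)^{⊗L} + (−1)^i (A₀−A₁)^{⊗L}] and N_i = ½[(M₀+M₁)^{⊗L} + (−1)^i (M₀−M₁)^{⊗L}], one has Σ_{i=0}^{1} Tr(S_i N_i) = ½ + ½ [2(Tr(A₀M₀) + Tr(A₁M₁)) − 1]^L. -/

import Mathlib

open Matrix BigOperators Finset
open scoped ComplexOrder

noncomputable def matAbs {d : Type*} [Fintype d] [DecidableEq d] (E : Matrix d d ℂ) : Matrix d d ℂ :=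
  (Matrix.posSemidef_conjTranspose_mul_self E).isHermitian.eigenvectorUnitary.1 *
    Matrix.diagonal ((↑) ∘ (√·) ∘ (Matrix.posSemidef_conjTranspose_mul_self E).isHermitian.eigenvalues) *
    (star (Matrix.posSemidef_conjTranspose_mul_self E).isHermitian.eigenvectorUnitary : Matrix d d ℂ)

noncomputable def tpow {d : Type*} (E : Matrix d d ℂ) (L : ℕ) :
    Matrix (Fin L → d) (Fin L → d) ℂ :=
  Matrix.of fun i j => ∏ l, E (i l) (j l)

noncomputable def tfam {d : Type*} {L : ℕ} (A : Fin L → Matrix d d ℂ) :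
    Matrix (Fin L → d) (Fin L → d) ℂ :=
  Matrix.of fun i j => ∏ l, A l (i l) (j l)

def pt {a b : Type*} (M : Matrix (a × b) (a × b) ℂ) : Matrix (a × b) (a × b) ℂ :=
  Matrix.of fun x y => M (x.1, y.2) (y.1, x.2)

/-! The ± cross terms cancel in the sum over the parity `i`, leaving
`½ [Tr((A₀+A₁)^{⊗L}(M₀+M₁)^{⊗L}) + Tr((A₀-A₁)^{⊗L}(M₀-M₁)^{⊗L})]`. Multiplicativity of the
trace under tensor powers turns this into `½ [Tr((A₀+A₁)(M₀+M₁))^L + Tr((A₀-A₁)(M₀-M₁))^L]`,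
where the first trace is `Tr(A₀+A₁) = 1` and the second is `2(Tr A₀M₀ + Tr A₁M₁) - 1`. -/

theorem trace_tpow_mul_tpow {d : Type*} [Fintype d] (X Y : Matrix d d ℂ) (L : ℕ) :
    (tpow X L * tpow Y L).trace = (X * Y).trace ^ L := by
  have h : (X * Y).trace = ∑ c : d × d, X c.1 c.2 * Y c.2 c.1 := by
    simp [Matrix.trace, Matrix.mul_apply, Matrix.diag, Fintype.sum_prod_type]
  rw [h, Fintype.sum_pow,
    ← (Equiv.arrowProdEquivProdArrow (Fin L) (fun _ => d) (fun _ => d)).symm.sum_comp]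
  simp only [Matrix.trace, Matrix.diag, Matrix.mul_apply, tpow, Matrix.of_apply,
    Equiv.arrowProdEquivProdArrow, Equiv.coe_fn_symm_mk]
  rw [← Fintype.sum_prod_type']
  simp [← Finset.prod_mul_distrib]

theorem sum_trace_parity_mul {n K : Type*} [Fintype n] [Field K] [NeZero (2 : K)] (P Q R T : Matrix n n K) :
    ∑ i : Fin 2, (((2 : K)⁻¹ • (P + (-1 : K) ^ (i : ℕ) • Q)) *
        ((2 : K)⁻¹ • (R + (-1 : K) ^ (i : ℕ) • T))).trace
      = (2 : K)⁻¹ * ((P * R).trace + (Q * T).trace) := by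
  simp only [Fin.sum_univ_two, Fin.val_zero, Fin.val_one, pow_zero, pow_one, one_smul,
    neg_one_smul, smul_mul_smul_comm, trace_smul, add_mul, mul_add, mul_neg, neg_mul, neg_neg,
    trace_add, trace_neg, smul_eq_mul]
  field_simp
  ring

theorem trace_sub_mul_sub {n R : Type*} [Fintype n] [CommRing R] (A₀ A₁ M₀ M₁ : Matrix n n R) :
    ((A₀ - A₁) * (M₀ - M₁)).trace
      = 2 * ((A₀ * M₀).trace + (A₁ * M₁).trace) - ((A₀ + A₁) * (M₀ + M₁)).trace := by
  simp only [sub_mul, mul_sub, add_mul, mul_add, trace_sub, trace_add]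
  ring

theorem stmt_19_general {d : Type*} [Fintype d] [DecidableEq d] (L : ℕ)
    (A M : Fin 2 → Matrix d d ℂ)
    (hAtr : (A 0 + A 1).trace = 1)
    (hMsum : M 0 + M 1 = 1)
    (S N : Fin 2 → Matrix (Fin L → d) (Fin L → d) ℂ)
    (hS : ∀ i : Fin 2, S i =
      (2 : ℂ)⁻¹ • (tpow (A 0 + A 1) L + (-1 : ℂ) ^ (i : ℕ) • tpow (A 0 - A 1) L))
    (hN : ∀ i : Fin 2, N i =
      (2 : ℂ)⁻¹ • (tpow (M 0 + M 1) L + (-1 : ℂ) ^ (i : ℕ) • tpow (M 0 - M 1) L)) :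
    ∑ i : Fin 2, (S i * N i).trace
      = 1 / 2 + 1 / 2 * (2 * ((A 0 * M 0).trace + (A 1 * M 1).trace) - 1) ^ L := by
  have h_plus : ((A 0 + A 1) * (M 0 + M 1)).trace = 1 := by rw [hMsum, mul_one, hAtr]
  simp only [hS, hN]
  rw [sum_trace_parity_mul, trace_tpow_mul_tpow, trace_tpow_mul_tpow, trace_sub_mul_sub, h_plus,
    one_pow]
  ring

/-- success probability of the product measurement on the parity ensemble:
`Σᵢ Tr(Sᵢ Nᵢ) = ½ + ½ [2(Tr(A₀M₀)+Tr(A₁M₁)) - 1]^L`. -/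
theorem stmt_19 {d : Type*} [Fintype d] [DecidableEq d] (L : ℕ) (hL : 0 < L)
    (A M : Fin 2 → Matrix d d ℂ)
    (hA : ∀ i, (A i).IsHermitian) (hAtr : (A 0 + A 1).trace = 1)
    (hM : ∀ i, (M i).PosSemidef) (hMsum : M 0 + M 1 = 1)
    (S N : Fin 2 → Matrix (Fin L → d) (Fin L → d) ℂ)
    (hS : ∀ i : Fin 2, S i =
      (2 : ℂ)⁻¹ • (tpow (A 0 + A 1) L + (-1 : ℂ) ^ (i : ℕ) • tpow (A 0 - A 1) L))
    (hN : ∀ i : Fin 2, N i =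
      (2 : ℂ)⁻¹ • (tpow (M 0 + M 1) L + (-1 : ℂ) ^ (i : ℕ) • tpow (M 0 - M 1) L)) :
    ∑ i : Fin 2, (S i * N i).trace
      = 1 / 2 + 1 / 2 * (2 * ((A 0 * M 0).trace + (A 1 * M 1).trace) - 1) ^ L :=
  stmt_19_general L A M hAtr hMsum S N hS hN
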